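/- For α ∈ (0,1/2), the set {(u_min, u_maj) ∈ [0,1]² : (α/(1-α))·u_min + u_maj ≥ 1 and α·u_min + (1-α)(1-u_maj) ≤ α} equals the convex hull of the three points (0,1), (1,1), and (1/2, 1 - α/(2(1-α))). -/
import Mathlib

theorem stmt_13 (α : ℝ) (hα0 : 0 < α) (hα1 : α < 1/2) :
    {p : ℝ × ℝ | p.1 ∈ Set.Icc (0:ℝ) 1 ∧ p.2 ∈ Set.Icc (0:ℝ) 1 ∧
        1 ≤ (α / (1 - α)) * p.1 + p.2 ∧
        α * p.1 + (1 - α) * (1 - p.2) ≤ α} =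
      convexHull ℝ {((0:ℝ), (1:ℝ)), (1, 1), (1/2, 1 - α / (2 * (1 - α)))} := by
  have h1α : (0:ℝ) < 1 - α := by linarith
  have hβ0 : 0 < α / (1 - α) := div_pos hα0 h1α
  have hβ1 : α / (1 - α) < 1 := by rw [div_lt_one h1α]; linarith
  have hβval : α / (1 - α) * (1 - α) = α := by field_simp
  apply Set.Subset.antisymm
  · rintro ⟨u, v⟩ ⟨⟨hu0, hu1⟩, ⟨hv0, hv1⟩, h3, h4⟩
    simp only at hu0 hu1 hv0 hv1 h3 h4
    set β := α / (1 - α) with hβ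
    set w : Fin 3 → ℝ := ![1 - u - (1 - v)/β, u - (1 - v)/β, 2*((1 - v)/β)] with hw
    set z : Fin 3 → ℝ × ℝ := ![(0, 1), (1, 1), (1/2, 1 - α / (2 * (1 - α)))] with hz
    have hβne : β ≠ 0 := ne_of_gt hβ0
    have hw0 : ∀ i ∈ Finset.univ, 0 ≤ w i := by
      intro i _
      fin_cases i
      · show (0:ℝ) ≤ 1 - u - (1 - v)/β
        have h : (1 - v)/β ≤ 1 - u := by
          rw [div_le_iff₀ hβ0]
          nlinarith [hβval]
        linarith
      · show (0:ℝ) ≤ u - (1 - v)/β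
        have h : (1 - v)/β ≤ u := by
          rw [div_le_iff₀ hβ0]
          nlinarith
        linarith
      · show (0:ℝ) ≤ 2*((1 - v)/β)
        have h : (0:ℝ) ≤ (1 - v)/β := div_nonneg (by linarith) (le_of_lt hβ0)
        linarith
    have hws : ∑ i, w i = 1 := by
      simp only [hw, Fin.sum_univ_three, Matrix.cons_val_zero, Matrix.cons_val_one,
        Matrix.head_cons, Matrix.cons_val_two, Matrix.tail_cons]
      ring
    have hzs : ∀ i ∈ Finset.univ, z i ∈
        ({((0:ℝ), (1:ℝ)), (1, 1), (1/2, 1 - α / (2 * (1 - α)))} : Set (ℝ × ℝ)) := by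
      intro i _
      fin_cases i <;> simp [hz]
    have hmem := Finset.centerMass_mem_convexHull Finset.univ hw0 (by rw [hws]; norm_num) hzs
    have hcancel : (1 - v)/β * β = 1 - v := div_mul_cancel₀ _ hβne
    have h2c : α / (2 * (1 - α)) = β / 2 := by
      rw [hβ, div_div, mul_comm]
    have hcm : Finset.univ.centerMass w z = (u, v) := by
      rw [Finset.centerMass, hws]
      simp only [inv_one, one_smul, Fin.sum_univ_three, hw, hz, Matrix.cons_val_zero,
        Matrix.cons_val_one, Matrix.head_cons, Matrix.cons_val_two, Matrix.tail_cons,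
        Prod.smul_mk, Prod.mk_add_mk, smul_eq_mul]
      refine Prod.ext ?_ ?_
      · show (1 - u - (1 - v)/β) * 0 + (u - (1 - v)/β) * 1 + 2*((1 - v)/β) * (1/2) = u
        ring
      · show (1 - u - (1 - v)/β) * 1 + (u - (1 - v)/β) * 1
            + 2*((1 - v)/β) * (1 - α / (2 * (1 - α))) = v
        rw [h2c]
        linear_combination -hcancel
    rwa [hcm] at hmem
  · apply convexHull_min
    · intro p hp
      simp only [Set.mem_insert_iff, Set.mem_singleton_iff] at hp
      simp only [Set.mem_setOf_eq, Set.mem_Icc]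
      rcases hp with rfl | rfl | rfl
      · refine ⟨by norm_num, by norm_num, by norm_num, ?_⟩
        norm_num
        linarith
      · refine ⟨by norm_num, by norm_num, ?_, by norm_num⟩
        simp only [mul_one]
        linarith
      · have h2 : (0:ℝ) < 2 * (1 - α) := by linarith
        have hc : α / (2 * (1 - α)) * (2 * (1 - α)) = α := by field_simp
        have hle : α / (2 * (1 - α)) ≤ 1 := by rw [div_le_one h2]; linarith
        have hpos : 0 < α / (2 * (1 - α)) := div_pos hα0 h2
        have hhalf : α / (1 - α) * (1/2) = α / (2 * (1 - α)) := by
          rw [div_mul_div_comm, mul_one, mul_comm (1 - α) 2]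
        refine ⟨⟨by norm_num, by norm_num⟩, ⟨by linarith, by linarith⟩, ?_, ?_⟩
        · simp only
          rw [hhalf]
          linarith
        · simp only
          nlinarith [hc]
    · rintro x hx y hy a b ha hb hab
      obtain ⟨⟨hx0, hx1⟩, ⟨hx2, hx3⟩, hx4, hx5⟩ := hx
      obtain ⟨⟨hy0, hy1⟩, ⟨hy2, hy3⟩, hy4, hy5⟩ := hy
      simp only [Set.mem_setOf_eq, Prod.fst_add, Prod.snd_add, Prod.smul_fst, Prod.smul_snd,
        smul_eq_mul, Set.mem_Icc]
      refine ⟨⟨?_, ?_⟩, ⟨?_, ?_⟩, ?_, ?_⟩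
      · have := mul_nonneg ha hx0; have := mul_nonneg hb hy0; linarith
      · have := mul_le_mul_of_nonneg_left hx1 ha
        have := mul_le_mul_of_nonneg_left hy1 hb
        linarith
      · have := mul_nonneg ha hx2; have := mul_nonneg hb hy2; linarith
      · have := mul_le_mul_of_nonneg_left hx3 ha
        have := mul_le_mul_of_nonneg_left hy3 hb
        linarith
      · nlinarith [mul_le_mul_of_nonneg_left hx4 ha, mul_le_mul_of_nonneg_left hy4 hb]
      · nlinarith [mul_le_mul_of_nonneg_left hx5 ha, mul_le_mul_of_nonneg_left hy5 hb]
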